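/- arXiv:2008.11460 — 7 statements merged into one kernel-verified Lean document; each statement's English description precedes it below -/
import Mathlib

section
/- Let a > 0, c > 0 and let j ≥ 1 be an integer. Define J(d) := ∫₁^∞ t^{j−3/2} · exp(−(a·√t − d·√(c/t))²) dt for d > 0. Then J(d) ≍ d^{j−1} as d → ∞; that is, there exist constants C₁ > 0, C₂ > 0 and d₀ > 0 such that C₁·d^{j−1} ≤ J(d) ≤ C₂·d^{j−1} for all d ≥ d₀. -/
open Real MeasureTheory Set

/-!
Substituting `t = x²` turns the integral into `2 ∫₁^∞ x^(2j-2) exp(-a² (x - s²/x)²) dx` with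
`s² = d √c / a`. Since `x - s²/x = (x - s)(x + s)/x`, the exponent is at least `a² (x - s)²`, so the
integrand is dominated by `x^(2j-2)` times a unit-width Gaussian centred at `s`, whose integral is
`O(s^(2j-2))`; conversely on `(s, s + 1/2]` the exponent is at most `a²` and `x^(2j-2) ≥ s^(2j-2)`.
Finally `s^(2j-2) = (√c / a)^(j-1) d^(j-1)`.
-/

lemma sq_sub_le_sq_sub_sq_div {x s : ℝ} (hx : 0 < x) (hs : 0 ≤ s) :
    (x - s) ^ 2 ≤ (x - s ^ 2 / x) ^ 2 := by
  have hfactor : x - s ^ 2 / x = (x - s) * ((x + s) / x) := by field_simp; ring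
  have hratio : 1 ≤ (x + s) / x := by rw [le_div_iff₀ hx]; linarith
  rw [hfactor, mul_pow]
  exact le_mul_of_one_le_right (sq_nonneg _) (one_le_pow₀ hratio)

lemma abs_pow_le_two_pow_mul_pow_mul (n : ℕ) {s : ℝ} (hs : 1 ≤ s) (x : ℝ) :
    |x| ^ n ≤ 2 ^ n * s ^ n * (|x - s| ^ n + 1) := by
  have hsn : 1 ≤ s ^ n := one_le_pow₀ hs
  calc |x| ^ n ≤ (|x - s| + s) ^ n := by
        gcongr; simpa [abs_of_nonneg (zero_le_one.trans hs)] using abs_add_le (x - s) s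
    _ ≤ 2 ^ (n - 1) * (|x - s| ^ n + s ^ n) := add_pow_le (abs_nonneg _) (by linarith) n
    _ ≤ 2 ^ n * (|x - s| ^ n + s ^ n) := by gcongr; norm_num; omega
    _ ≤ 2 ^ n * (s ^ n * (|x - s| ^ n + 1)) := by
        gcongr
        nlinarith [mul_le_mul_of_nonneg_right hsn (pow_nonneg (abs_nonneg (x - s)) n)]
    _ = 2 ^ n * s ^ n * (|x - s| ^ n + 1) := by ring

section

variable {b : ℝ} (n : ℕ)

lemma integrable_abs_pow_mul_exp_neg_mul_sq (hb : 0 < b) :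
    Integrable fun x : ℝ => |x| ^ n * exp (-b * x ^ 2) := by
  have h := (integrable_rpow_mul_exp_neg_mul_sq hb (s := n)
    (by linarith [n.cast_nonneg (α := ℝ)])).abs
  simpa only [rpow_natCast, abs_mul, abs_pow, abs_exp] using h

lemma integrable_abs_sub_pow_add_one_mul_exp (hb : 0 < b) (s : ℝ) :
    Integrable fun x : ℝ => (|x - s| ^ n + 1) * exp (-b * (x - s) ^ 2) := by
  simpa only [Pi.add_apply, add_mul, one_mul] using
    ((integrable_abs_pow_mul_exp_neg_mul_sq n hb).add
      (integrable_exp_neg_mul_sq hb)).comp_sub_right s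

lemma integral_abs_sub_pow_add_one_mul_exp (hb : 0 < b) (s : ℝ) :
    ∫ x, (|x - s| ^ n + 1) * exp (-b * (x - s) ^ 2)
      = (∫ v, |v| ^ n * exp (-b * v ^ 2)) + √(π / b) := by
  rw [integral_sub_right_eq_self (fun v => (|v| ^ n + 1) * exp (-b * v ^ 2)) s]
  simp only [add_mul, one_mul]
  rw [integral_add (integrable_abs_pow_mul_exp_neg_mul_sq n hb) (integrable_exp_neg_mul_sq hb),
    integral_gaussian]

lemma pow_mul_exp_neg_mul_sq_sub_sq_div_le (hb : 0 ≤ b) {s x : ℝ} (hs : 1 ≤ s) (hx : 0 < x) :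
    x ^ n * exp (-b * (x - s ^ 2 / x) ^ 2)
      ≤ 2 ^ n * s ^ n * ((|x - s| ^ n + 1) * exp (-b * (x - s) ^ 2)) := by
  have hexp : exp (-b * (x - s ^ 2 / x) ^ 2) ≤ exp (-b * (x - s) ^ 2) :=
    exp_le_exp.2 <| mul_le_mul_of_nonpos_left
      (sq_sub_le_sq_sub_sq_div hx (zero_le_one.trans hs)) (neg_nonpos.2 hb)
  calc x ^ n * exp (-b * (x - s ^ 2 / x) ^ 2)
      ≤ (2 ^ n * s ^ n * (|x - s| ^ n + 1)) * exp (-b * (x - s) ^ 2) := by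
        have hpow := abs_pow_le_two_pow_mul_pow_mul n hs x
        rw [abs_of_pos hx] at hpow
        gcongr
    _ = _ := by ring

lemma integrableOn_pow_mul_exp_neg_mul_sq_sub_sq_div (hb : 0 < b) {s : ℝ} (hs : 1 ≤ s) :
    IntegrableOn (fun x => x ^ n * exp (-b * (x - s ^ 2 / x) ^ 2)) (Ioi 0) := by
  have hcont : ContinuousOn (fun x => x ^ n * exp (-b * (x - s ^ 2 / x) ^ 2)) (Ioi 0) := by
    fun_prop (disch := intro x hx; exact ne_of_gt hx)
  have hmajorant := (integrable_abs_sub_pow_add_one_mul_exp n hb s).const_mul (2 ^ n * s ^ n)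
  refine hmajorant.integrableOn.mono' (hcont.aestronglyMeasurable measurableSet_Ioi) ?_
  filter_upwards [ae_restrict_mem measurableSet_Ioi] with x (hx : 0 < x)
  rw [norm_of_nonneg (by positivity)]
  exact pow_mul_exp_neg_mul_sq_sub_sq_div_le n hb.le hs hx

lemma integral_pow_mul_exp_neg_mul_sq_sub_sq_div_le (hb : 0 < b) {s : ℝ} (hs : 1 ≤ s) :
    ∫ x in Ioi 1, x ^ n * exp (-b * (x - s ^ 2 / x) ^ 2)
      ≤ 2 ^ n * ((∫ v, |v| ^ n * exp (-b * v ^ 2)) + √(π / b)) * s ^ n := by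
  have hmajorant := (integrable_abs_sub_pow_add_one_mul_exp n hb s).const_mul (2 ^ n * s ^ n)
  calc ∫ x in Ioi 1, x ^ n * exp (-b * (x - s ^ 2 / x) ^ 2)
      ≤ ∫ x in Ioi 1, 2 ^ n * s ^ n * ((|x - s| ^ n + 1) * exp (-b * (x - s) ^ 2)) :=
        setIntegral_mono_on
          ((integrableOn_pow_mul_exp_neg_mul_sq_sub_sq_div n hb hs).mono_set
            (Ioi_subset_Ioi zero_le_one))
          hmajorant.integrableOn measurableSet_Ioi fun x hx =>
            pow_mul_exp_neg_mul_sq_sub_sq_div_le n hb.le hs (zero_lt_one.trans hx)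
    _ ≤ ∫ x, 2 ^ n * s ^ n * ((|x - s| ^ n + 1) * exp (-b * (x - s) ^ 2)) :=
        setIntegral_le_integral hmajorant (.of_forall fun x => by positivity)
    _ = 2 ^ n * ((∫ v, |v| ^ n * exp (-b * v ^ 2)) + √(π / b)) * s ^ n := by
        rw [integral_const_mul, integral_abs_sub_pow_add_one_mul_exp n hb]; ring

lemma exp_neg_div_two_mul_pow_le_integral (hb : 0 < b) {s : ℝ} (hs : 1 ≤ s) :
    exp (-b) / 2 * s ^ n ≤ ∫ x in Ioi 1, x ^ n * exp (-b * (x - s ^ 2 / x) ^ 2) := by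
  have hint := (integrableOn_pow_mul_exp_neg_mul_sq_sub_sq_div n hb hs).mono_set
    (Ioi_subset_Ioi zero_le_one)
  have hsub : Ioc s (s + 1 / 2) ⊆ Ioi 1 := fun x hx => hs.trans_lt hx.1
  have hpoint : ∀ x ∈ Ioc s (s + 1 / 2),
      exp (-b) * s ^ n ≤ x ^ n * exp (-b * (x - s ^ 2 / x) ^ 2) := by
    rintro x ⟨hsx, hxs⟩
    have hx : 0 < x := by linarith
    -- `x - s² / x = (x - s)(x + s) / x ≤ 2 (x - s) ≤ 1`
    have hdist : (x - s ^ 2 / x) ^ 2 ≤ 1 := by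
      rw [show x - s ^ 2 / x = (x ^ 2 - s ^ 2) / x by field_simp]
      exact pow_le_one₀ (div_nonneg (by nlinarith) hx.le) ((div_le_one hx).2 (by nlinarith))
    rw [mul_comm]
    gcongr
    nlinarith
  calc exp (-b) / 2 * s ^ n = exp (-b) * s ^ n * volume.real (Ioc s (s + 1 / 2)) := by
        rw [volume_real_Ioc, add_sub_cancel_left, max_eq_left (by norm_num)]; ring
    _ ≤ ∫ x in Ioc s (s + 1 / 2), x ^ n * exp (-b * (x - s ^ 2 / x) ^ 2) :=
        setIntegral_ge_of_const_le_real measurableSet_Ioc (by simp) hpoint (hint.mono_set hsub)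
    _ ≤ ∫ x in Ioi 1, x ^ n * exp (-b * (x - s ^ 2 / x) ^ 2) :=
        setIntegral_mono_set hint (by
          filter_upwards [ae_restrict_mem measurableSet_Ioi] with x (hx : 1 < x)
          positivity) hsub.eventuallyLE

end

lemma integral_rpow_mul_exp_eq_two_mul_integral {a s : ℝ} (c d : ℝ) (ha : 0 < a)
    (hs : s ^ 2 = d * √c / a) {j : ℕ} (hj : 1 ≤ j) :
    ∫ t in Ioi (1 : ℝ), t ^ ((j : ℝ) - 3 / 2) * exp (-(a * √t - d * √(c / t)) ^ 2)
      = 2 * ∫ x in Ioi 1, x ^ (2 * (j - 1)) * exp (-a ^ 2 * (x - s ^ 2 / x) ^ 2) := by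
  have hsubst := integral_comp_rpow_Ioi_of_pos' (p := 2) two_pos zero_le_one
    (g := fun t => t ^ ((j : ℝ) - 3 / 2) * exp (-(a * √t - d * √(c / t)) ^ 2))
  rw [one_rpow] at hsubst
  rw [← hsubst, ← integral_const_mul]
  refine setIntegral_congr_fun measurableSet_Ioi fun x (hx : 1 < x) => ?_
  have hx0 : 0 < x := by linarith
  have hpow : x * (x ^ 2) ^ ((j : ℝ) - 3 / 2) = x ^ (2 * (j - 1)) := by
    rw [← rpow_natCast x 2, ← rpow_mul hx0.le, ← rpow_natCast,
      show ((2 * (j - 1) : ℕ) : ℝ) = 1 + 2 * ((j : ℝ) - 3 / 2) by push_cast [Nat.cast_sub hj]; ring,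
      rpow_add hx0, rpow_one, Nat.cast_ofNat]
  have hexponent : -(a * √(x ^ 2) - d * √(c / x ^ 2)) ^ 2 = -a ^ 2 * (x - s ^ 2 / x) ^ 2 := by
    rw [sqrt_div' c (sq_nonneg x), sqrt_sq hx0.le, hs]; field_simp
  rw [rpow_ofNat, show (2 : ℝ) - 1 = 1 by norm_num, rpow_one, smul_eq_mul, hexponent, ← hpow]
  ring

/-- For `a, c > 0` and an integer `j ≥ 1`, the integral
`J(d) = ∫₁^∞ t^{j−3/2} · exp(−(a√t − d√(c/t))²) dt` satisfies `J(d) ≍ d^{j−1}` as `d → ∞`. -/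
theorem laplace_integral_asymptotics (a c : ℝ) (ha : 0 < a) (hc : 0 < c)
    (j : ℕ) (hj : 1 ≤ j) :
    ∃ C₁ C₂ d₀ : ℝ, 0 < C₁ ∧ 0 < C₂ ∧ 0 < d₀ ∧ ∀ d : ℝ, d₀ ≤ d →
      C₁ * d ^ (j - 1) ≤
        (∫ t in Set.Ioi (1 : ℝ),
          t ^ ((j : ℝ) - 3/2) * Real.exp (-(a * Real.sqrt t - d * Real.sqrt (c / t)) ^ 2)) ∧
      (∫ t in Set.Ioi (1 : ℝ),
          t ^ ((j : ℝ) - 3/2) * Real.exp (-(a * Real.sqrt t - d * Real.sqrt (c / t)) ^ 2)) ≤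
        C₂ * d ^ (j - 1) := by
  set n := 2 * (j - 1)
  set M := ∫ v, |v| ^ n * exp (-a ^ 2 * v ^ 2)
  have hb : 0 < a ^ 2 := by positivity
  have hsc : 0 < √c := sqrt_pos.2 hc
  have hM : 0 ≤ M := integral_nonneg fun v => by positivity
  refine ⟨exp (-a ^ 2) * (√c / a) ^ (j - 1), 2 * 2 ^ n * (M + √(π / a ^ 2)) * (√c / a) ^ (j - 1),
    a / √c, by positivity, by positivity, by positivity, fun d hd => ?_⟩
  have hd : 1 ≤ d * √c / a := by rwa [le_div_iff₀ ha, one_mul, ← div_le_iff₀ hsc]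
  set s := √(d * √c / a)
  have hs : s ^ 2 = d * √c / a := sq_sqrt (by linarith)
  have hs1 : 1 ≤ s := one_le_sqrt.2 hd
  have hsn : s ^ n = (√c / a) ^ (j - 1) * d ^ (j - 1) := by
    rw [pow_mul, hs, ← mul_pow]; ring_nf
  rw [integral_rpow_mul_exp_eq_two_mul_integral c d ha hs hj]
  constructor
  · calc exp (-a ^ 2) * (√c / a) ^ (j - 1) * d ^ (j - 1) = 2 * (exp (-a ^ 2) / 2 * s ^ n) := by
          rw [hsn]; ring
      _ ≤ _ := by gcongr; exact exp_neg_div_two_mul_pow_le_integral n hb hs1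
  · calc 2 * ∫ x in Ioi 1, x ^ n * exp (-a ^ 2 * (x - s ^ 2 / x) ^ 2)
        ≤ 2 * (2 ^ n * (M + √(π / a ^ 2)) * s ^ n) := by
          gcongr; exact integral_pow_mul_exp_neg_mul_sq_sub_sq_div_le n hb hs1
      _ = _ := by rw [hsn]; ring
end

section
/- Let σ > 0, set λ₁ := π/(2σ), and let K(s,t) := K_t(s) be as defined in the context. Suppose δ ∈ (0, σ), ε ∈ (0, λ₁), ℓ ∈ {0, 1}, and k ≥ 1 is an integer. Let O denote the operator acting in the s-variable by (O g)(s) = s · g'(s), and O^k its k-th iterate. Then there exists a constant C > 0 such that |∂_t^ℓ (O^k K_t)(s)| ≤ C · min(|s|, e^{(ε−λ₁)|s|}) for every (s,t) ∈ S_δ. -/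
/-!
Write `λ = π/(2σ)` and `z = λ(s - it)`. Then `K_t(s) = (π/σ) Im (1/sinh z)`, and the
derivatives of `1/sinh` are `F_m = P_m(cosh z) / sinh^{m+1} z` with `deg P_m ≤ m`. Hence
`O = s∂ₛ` and `∂ₜ` map finite sums of monomials `c sʲ F_m(z)` to sums of the same shape, and
after one application of `O` every monomial has `j ≥ 1`. On `S_δ` the point `z` stays away from
the zeros `iπℤ` of `sinh`, so `|sinh z| ≥ c e^{λ|s|}` and `|F_m(z)| ≤ D e^{-λ|s|}`; finally,
for `j ≥ 1`, `|s|ʲ e^{-λ|s|} ≤ C min(|s|, e^{(ε-λ)|s|})`.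
-/

open Real

/-- The Poisson-type kernel `K_t(s)` for the slice `N × (0, 2σ)`:
`K_t(s) = (2π/σ) · sin(πt/(2σ)) cosh(πs/(2σ)) / (cosh(πs/σ) − cos(πt/σ))`. -/
noncomputable def sliceKernel (σ t s : ℝ) : ℝ :=
  (2 * π / σ) * (Real.sin (π * t / (2 * σ)) * Real.cosh (π * s / (2 * σ)) /
    (Real.cosh (π * s / σ) - Real.cos (π * t / σ)))

/-- The operator `O` acting on functions of the variable `s` by `(O g)(s) = s · g'(s)`. -/
noncomputable def Oop : (ℝ → ℝ) → (ℝ → ℝ) := fun g s => s * deriv g s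

namespace Complex

theorem sinh_re (z : ℂ) : (sinh z).re = Real.sinh z.re * Real.cos z.im := by
  conv_lhs => rw [← re_add_im z]
  rw [sinh_add, sinh_mul_I, cosh_mul_I, ← ofReal_sinh, ← ofReal_cosh, ← ofReal_sin,
    ← ofReal_cos]
  simp only [add_re, mul_re, mul_im, ofReal_re, ofReal_im, I_re, I_im]
  ring

theorem sinh_im (z : ℂ) : (sinh z).im = Real.cosh z.re * Real.sin z.im := by
  conv_lhs => rw [← re_add_im z]
  rw [sinh_add, sinh_mul_I, cosh_mul_I, ← ofReal_sinh, ← ofReal_cosh, ← ofReal_sin,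
    ← ofReal_cos]
  simp only [add_im, mul_re, mul_im, ofReal_re, ofReal_im, I_re, I_im]
  ring

theorem sq_norm_sinh (z : ℂ) : ‖sinh z‖ ^ 2 = Real.sinh z.re ^ 2 + Real.sin z.im ^ 2 := by
  rw [Complex.sq_norm, normSq_apply, sinh_re, sinh_im]
  linear_combination (Real.sin z.im ^ 2) * Real.cosh_sq_sub_sinh_sq z.re
    + Real.sinh z.re ^ 2 * Real.sin_sq_add_cos_sq z.im

theorem norm_cosh_le_exp_abs_re (z : ℂ) : ‖cosh z‖ ≤ Real.exp |z.re| := by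
  calc ‖cosh z‖ = ‖exp z + exp (-z)‖ / 2 := by rw [cosh, norm_div]; simp
    _ ≤ (Real.exp z.re + Real.exp (-z.re)) / 2 := by
      gcongr
      exact (norm_add_le _ _).trans_eq (by rw [norm_exp, norm_exp, neg_re])
    _ = Real.cosh z.re := (Real.cosh_eq _).symm
    _ ≤ Real.exp |z.re| := by
      rw [← Real.cosh_abs, Real.cosh_eq]
      linarith [Real.exp_le_exp.2 (neg_le_self (abs_nonneg z.re))]

theorem exists_mul_exp_abs_re_le_norm_sinh {x₀ η : ℝ} (hx₀ : 0 < x₀) (hη : 0 < η) :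
    ∃ c, 0 < c ∧ ∀ z : ℂ, (x₀ ≤ |z.re| ∨ η ≤ |Real.sin z.im|) →
      c * Real.exp |z.re| ≤ ‖sinh z‖ := by
  refine ⟨min ((1 - Real.exp (-(2 * x₀))) / 2) (η * Real.exp (-x₀)),
    lt_min ?_ (by positivity), fun z hz => ?_⟩
  · have : Real.exp (-(2 * x₀)) < 1 := Real.exp_lt_one_iff.2 (by linarith)
    linarith
  have hsq := sq_norm_sinh z
  have hre : Real.sinh |z.re| ≤ ‖sinh z‖ := by
    rw [← Real.abs_sinh]
    exact (sq_le_sq.1 (by nlinarith [sq_nonneg (Real.sin z.im)])).trans_eq (abs_norm _)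
  have him : |Real.sin z.im| ≤ ‖sinh z‖ :=
    (sq_le_sq.1 (by nlinarith [sq_nonneg (Real.sinh z.re)])).trans_eq (abs_norm _)
  rcases le_or_gt x₀ |z.re| with hx | hx
  · have hexp : Real.exp (-|z.re|) ≤ Real.exp (-(2 * x₀)) * Real.exp |z.re| := by
      rw [← Real.exp_add]
      exact Real.exp_le_exp.2 (by linarith)
    calc _ ≤ (1 - Real.exp (-(2 * x₀))) / 2 * Real.exp |z.re| := by
          gcongr; exact min_le_left _ _
      _ ≤ Real.sinh |z.re| := by rw [Real.sinh_eq]; linarith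
      _ ≤ ‖sinh z‖ := hre
  · have hexp : Real.exp (-x₀) * Real.exp |z.re| ≤ 1 := by
      rw [← Real.exp_add]
      exact Real.exp_le_one_iff.2 (by linarith)
    calc _ ≤ η * Real.exp (-x₀) * Real.exp |z.re| := by
          gcongr; exact min_le_right _ _
      _ ≤ η := by nlinarith
      _ ≤ |Real.sin z.im| := hz.resolve_left hx.not_ge
      _ ≤ ‖sinh z‖ := him

end Complex

section SinhInvDeriv

open Polynomial

theorem Polynomial.norm_eval_le_of_natDegree_le {R : Type*} [NormedRing R] [NormOneClass R]
    {p : R[X]} {n : ℕ} (hp : p.natDegree ≤ n) {w : R} {M : ℝ} (hM : 1 ≤ M) (hw : ‖w‖ ≤ M) :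
    ‖p.eval w‖ ≤ (∑ i ∈ Finset.range (n + 1), ‖p.coeff i‖) * M ^ n := by
  rw [eval_eq_sum_range' (Nat.lt_succ_of_le hp), Finset.sum_mul]
  refine (norm_sum_le _ _).trans (Finset.sum_le_sum fun i hi => ?_)
  calc ‖p.coeff i * w ^ i‖ ≤ ‖p.coeff i‖ * ‖w‖ ^ i :=
        (norm_mul_le _ _).trans (by gcongr; exact norm_pow_le _ _)
    _ ≤ ‖p.coeff i‖ * M ^ n := by
        gcongr
        exact (pow_le_pow_left₀ (norm_nonneg _) hw i).trans
          (pow_le_pow_right₀ hM (Finset.mem_range_succ_iff.1 hi))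

-- `(P(cosh z) / sinh^{m+1} z)' = ((X² - 1) P' - (m + 1) X P)(cosh z) / sinh^{m+2} z`
noncomputable def sinhInvDerivPoly : ℕ → ℂ[X]
  | 0 => 1
  | m + 1 =>
    (X ^ 2 - 1) * derivative (sinhInvDerivPoly m) - C ((m : ℂ) + 1) * X * sinhInvDerivPoly m

noncomputable def sinhInvDeriv (m : ℕ) (z : ℂ) : ℂ :=
  (sinhInvDerivPoly m).eval (Complex.cosh z) / Complex.sinh z ^ (m + 1)

theorem sinhInvDeriv_zero (z : ℂ) : sinhInvDeriv 0 z = (Complex.sinh z)⁻¹ := by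
  simp [sinhInvDeriv, sinhInvDerivPoly]

theorem natDegree_sinhInvDerivPoly_le (m : ℕ) : (sinhInvDerivPoly m).natDegree ≤ m := by
  induction m with
  | zero => simp [sinhInvDerivPoly]
  | succ m ih =>
    rw [sinhInvDerivPoly]
    refine (natDegree_sub_le _ _).trans (max_le ?_ ?_)
    · rcases Nat.eq_zero_or_pos m with rfl | hm
      · simp [sinhInvDerivPoly]
      have hquad : ((X : ℂ[X]) ^ 2 - 1).natDegree ≤ 2 := by compute_degree
      refine natDegree_mul_le_of_le hquad
        (natDegree_derivative_le _ |>.trans (Nat.sub_le_sub_right ih 1)) |>.trans ?_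
      omega
    · have hlin : (C ((m : ℂ) + 1) * X).natDegree ≤ 0 + 1 :=
        natDegree_mul_le_of_le (natDegree_C _).le natDegree_X_le
      exact natDegree_mul_le_of_le hlin ih |>.trans (by omega)

theorem hasDerivAt_sinhInvDeriv (m : ℕ) {z : ℂ} (hz : Complex.sinh z ≠ 0) :
    HasDerivAt (sinhInvDeriv m) (sinhInvDeriv (m + 1) z) z := by
  have hnum := ((sinhInvDerivPoly m).hasDerivAt (Complex.cosh z)).comp z
    (Complex.hasDerivAt_cosh z)
  have hden := (Complex.hasDerivAt_sinh z).fun_pow (m + 1)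
  refine (hnum.fun_div hden (pow_ne_zero _ hz)).congr_deriv ?_
  rw [sinhInvDeriv, sinhInvDerivPoly]
  field_simp
  simp only [eval_sub, eval_mul, eval_pow, eval_X, eval_C, eval_one, Function.comp_apply,
    Nat.cast_add, Nat.cast_one, Nat.add_sub_cancel]
  linear_combination (-(derivative (sinhInvDerivPoly m)).eval (Complex.cosh z) *
    Complex.sinh z ^ (2 * m + 2)) * Complex.cosh_sq_sub_sinh_sq z

theorem norm_sinhInvDeriv_le {c : ℝ} (hc : 0 < c) (m : ℕ) {z : ℂ}
    (hz : c * Real.exp |z.re| ≤ ‖Complex.sinh z‖) :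
    ‖sinhInvDeriv m z‖ ≤ (∑ i ∈ Finset.range (m + 1), ‖(sinhInvDerivPoly m).coeff i‖) /
      c ^ (m + 1) * Real.exp (-|z.re|) := by
  set B := ∑ i ∈ Finset.range (m + 1), ‖(sinhInvDerivPoly m).coeff i‖
  set E := Real.exp |z.re|
  have hE : 1 ≤ E := Real.one_le_exp (abs_nonneg _)
  have hnum : ‖(sinhInvDerivPoly m).eval (Complex.cosh z)‖ ≤ B * E ^ m :=
    norm_eval_le_of_natDegree_le (natDegree_sinhInvDerivPoly_le m) hE
      (Complex.norm_cosh_le_exp_abs_re z)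
  have hden : (c * E) ^ (m + 1) ≤ ‖Complex.sinh z ^ (m + 1)‖ := by
    rw [norm_pow]; gcongr
  calc ‖sinhInvDeriv m z‖ ≤ B * E ^ m / (c * E) ^ (m + 1) := by
        rw [sinhInvDeriv, norm_div]
        gcongr
    _ = B / c ^ (m + 1) * Real.exp (-|z.re|) := by
        rw [Real.exp_neg]
        field_simp
        ring

end SinhInvDeriv

theorem Real.pow_le_factorial_div_pow_mul_exp {b x : ℝ} (hb : 0 < b) (hx : 0 ≤ x) (n : ℕ) :
    x ^ n ≤ n.factorial / b ^ n * Real.exp (b * x) := by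
  have h := Real.pow_div_factorial_le_exp (b * x) (mul_nonneg hb.le hx) n
  rw [mul_pow, div_le_iff₀ (by positivity)] at h
  rw [div_mul_eq_mul_div, le_div_iff₀ (by positivity)]
  linarith

theorem Real.exists_pow_mul_exp_neg_le_min {a ε : ℝ} (ha : 0 < a) (hε : 0 < ε) {j : ℕ}
    (hj : 1 ≤ j) :
    ∃ C, 0 < C ∧ ∀ x, 0 ≤ x →
      x ^ j * Real.exp (-(a * x)) ≤ C * min x (Real.exp ((ε - a) * x)) := by
  set C₁ : ℝ := (j - 1).factorial / a ^ (j - 1)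
  set C₂ : ℝ := j.factorial / ε ^ j
  refine ⟨max C₁ C₂, by positivity, fun x hx => ?_⟩
  rw [mul_min_of_nonneg _ _ (by positivity)]
  refine le_min ?_ ?_
  · calc x ^ j * Real.exp (-(a * x)) = x * (x ^ (j - 1) * Real.exp (-(a * x))) := by
          rw [← mul_assoc, ← pow_succ', Nat.sub_add_cancel hj]
      _ ≤ x * C₁ := by
          gcongr
          rw [← le_div_iff₀ (Real.exp_pos _), Real.exp_neg, div_inv_eq_mul]
          exact pow_le_factorial_div_pow_mul_exp ha hx _
      _ ≤ max C₁ C₂ * x := by rw [mul_comm]; gcongr; exact le_max_left _ _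
  · calc x ^ j * Real.exp (-(a * x)) ≤ C₂ * Real.exp (ε * x) * Real.exp (-(a * x)) := by
          gcongr
          exact pow_le_factorial_div_pow_mul_exp hε hx _
      _ = C₂ * Real.exp ((ε - a) * x) := by rw [mul_assoc, ← Real.exp_add]; ring_nf
      _ ≤ max C₁ C₂ * Real.exp ((ε - a) * x) := by gcongr; exact le_max_right _ _

def sliceArg (a s t : ℝ) : ℂ := a * (s - t * Complex.I)

@[simp] theorem sliceArg_re (a s t : ℝ) : (sliceArg a s t).re = a * s := by simp [sliceArg]

@[simp] theorem sliceArg_im (a s t : ℝ) : (sliceArg a s t).im = -(a * t) := by simp [sliceArg]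

theorem hasDerivAt_sliceArg_left (a s t : ℝ) :
    HasDerivAt (fun s' => sliceArg a s' t) a s := by
  simpa [sliceArg] using
    ((Complex.ofRealCLM.hasDerivAt (x := s)).sub_const (t * Complex.I)).const_mul (a : ℂ)

theorem hasDerivAt_sliceArg_right (a s t : ℝ) :
    HasDerivAt (fun t' => sliceArg a s t') (-(a * Complex.I)) t := by
  simpa [sliceArg] using (((Complex.ofRealCLM.hasDerivAt (x := t)).mul_const
    Complex.I).const_sub (s : ℂ)).const_mul (a : ℂ)

section MonomialSum

variable (F : ℕ → ℂ → ℂ) (a : ℝ)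

inductive IsMonomialSum (j₀ : ℕ) : (ℝ → ℝ → ℂ) → Prop
  | monomial (c : ℂ) {j : ℕ} (m : ℕ) (hj : j₀ ≤ j) :
      IsMonomialSum j₀ fun s t => c * s ^ j * F m (sliceArg a s t)
  | add {g h : ℝ → ℝ → ℂ} : IsMonomialSum j₀ g → IsMonomialSum j₀ h → IsMonomialSum j₀ (g + h)

variable {F a} {U : Set ℂ} {j₀ : ℕ} {g : ℝ → ℝ → ℂ}

theorem IsMonomialSum.exists_hasDerivAt_right
    (hF : ∀ m, ∀ z ∈ U, HasDerivAt (F m) (F (m + 1) z) z) (hg : IsMonomialSum F a j₀ g) :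
    ∃ g', IsMonomialSum F a j₀ g' ∧
      ∀ s t, sliceArg a s t ∈ U → HasDerivAt (fun t' => g s t') (g' s t) t := by
  induction hg with
  | @monomial c j m hj =>
    refine ⟨_, .monomial (-(a * Complex.I) * c) (m + 1) hj, fun s t hz => ?_⟩
    exact (((hF m _ hz).comp t (hasDerivAt_sliceArg_right a s t)).const_mul
      (c * s ^ j)).congr_deriv (by ring)
  | add _ _ ih₁ ih₂ =>
    obtain ⟨g₁, hg₁, hd₁⟩ := ih₁
    obtain ⟨g₂, hg₂, hd₂⟩ := ih₂
    exact ⟨g₁ + g₂, hg₁.add hg₂, fun s t hz => (hd₁ s t hz).add (hd₂ s t hz)⟩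

theorem IsMonomialSum.exists_mul_hasDerivAt_left
    (hF : ∀ m, ∀ z ∈ U, HasDerivAt (F m) (F (m + 1) z) z) (hg : IsMonomialSum F a j₀ g) :
    ∃ g', IsMonomialSum F a 1 g' ∧ ∀ s t, sliceArg a s t ∈ U →
      ∃ d, HasDerivAt (fun s' => g s' t) d s ∧ s * d = g' s t := by
  induction hg with
  | @monomial c j m hj =>
    have hd (s t : ℝ) (hz : sliceArg a s t ∈ U) :=
      (((hasDerivAt_pow j (s : ℂ)).comp_ofReal).const_mul c).mul
        ((hF m _ hz).comp s (hasDerivAt_sliceArg_left a s t))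
    rcases j with _ | i
    · refine ⟨_, .monomial (a * c) (j := 1) (m + 1) le_rfl, fun s t hz => ⟨_, hd s t hz, ?_⟩⟩
      simp only [Function.comp_apply, Nat.cast_zero, zero_mul, mul_zero, pow_zero, zero_add]
      ring
    · refine ⟨_, (IsMonomialSum.monomial ((i + 1 : ℕ) * c) (j := i + 1) m (by omega)).add
        (.monomial (a * c) (j := i + 2) (m + 1) (by omega)), fun s t hz => ⟨_, hd s t hz, ?_⟩⟩
      simp only [Function.comp_apply, Pi.add_apply, Nat.add_sub_cancel]
      ring
  | add _ _ ih₁ ih₂ =>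
    obtain ⟨g₁, hg₁, hd₁⟩ := ih₁
    obtain ⟨g₂, hg₂, hd₂⟩ := ih₂
    refine ⟨g₁ + g₂, hg₁.add hg₂, fun s t hz => ?_⟩
    obtain ⟨d₁, hd₁, hsd₁⟩ := hd₁ s t hz
    obtain ⟨d₂, hd₂, hsd₂⟩ := hd₂ s t hz
    exact ⟨d₁ + d₂, hd₁.add hd₂, by rw [mul_add, hsd₁, hsd₂]; rfl⟩

theorem IsMonomialSum.exists_Oop_eq
    (hF : ∀ m, ∀ z ∈ U, HasDerivAt (F m) (F (m + 1) z) z) (hg : IsMonomialSum F a j₀ g) :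
    ∃ g', IsMonomialSum F a 1 g' ∧ ∀ t, (∀ s, sliceArg a s t ∈ U) →
      Oop (fun s => (g s t).im) = fun s => (g' s t).im := by
  obtain ⟨g', hg', hd⟩ := hg.exists_mul_hasDerivAt_left hF
  refine ⟨g', hg', fun t ht => funext fun s => ?_⟩
  obtain ⟨d, hd, hsd⟩ := hd s t (ht s)
  have him : HasDerivAt (fun s' => (g s' t).im) d.im s :=
    Complex.imCLM.hasFDerivAt.comp_hasDerivAt s hd
  rw [Oop, him.deriv, ← hsd, Complex.im_ofReal_mul]

theorem IsMonomialSum.exists_iterate_Oop_eq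
    (hF : ∀ m, ∀ z ∈ U, HasDerivAt (F m) (F (m + 1) z) z) (hg : IsMonomialSum F a j₀ g)
    (k : ℕ) :
    ∃ g', IsMonomialSum F a 1 g' ∧ ∀ t, (∀ s, sliceArg a s t ∈ U) →
      Oop^[k + 1] (fun s => (g s t).im) = fun s => (g' s t).im := by
  induction k with
  | zero => simpa using hg.exists_Oop_eq hF
  | succ k ih =>
    obtain ⟨g', hg', hk⟩ := ih
    obtain ⟨g'', hg'', hO⟩ := hg'.exists_Oop_eq hF
    exact ⟨g'', hg'', fun t ht => by rw [Function.iterate_succ_apply', hk t ht, hO t ht]⟩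

theorem IsMonomialSum.exists_norm_le_min {S : Set (ℝ × ℝ)} {ε : ℝ} (ha : 0 < a) (hε : 0 < ε)
    (hFS : ∀ m, ∃ D, ∀ p ∈ S, ‖F m (sliceArg a p.1 p.2)‖ ≤ D * Real.exp (-(a * |p.1|)))
    (hg : IsMonomialSum F a 1 g) :
    ∃ C, 0 < C ∧ ∀ p ∈ S, ‖g p.1 p.2‖ ≤ C * min |p.1| (Real.exp ((ε - a) * |p.1|)) := by
  induction hg with
  | @monomial c j m hj =>
    obtain ⟨D, hD⟩ := hFS m
    obtain ⟨C, hC, hpow⟩ := Real.exists_pow_mul_exp_neg_le_min ha hε hj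
    refine ⟨‖c‖ * |D| * C + 1, by positivity, fun p hp => ?_⟩
    calc ‖c * p.1 ^ j * F m (sliceArg a p.1 p.2)‖
        = ‖c‖ * |p.1| ^ j * ‖F m (sliceArg a p.1 p.2)‖ := by simp
      _ ≤ ‖c‖ * |p.1| ^ j * (|D| * Real.exp (-(a * |p.1|))) := by
          gcongr
          exact (hD p hp).trans (by gcongr; exact le_abs_self D)
      _ = ‖c‖ * |D| * (|p.1| ^ j * Real.exp (-(a * |p.1|))) := by ring
      _ ≤ ‖c‖ * |D| * (C * min |p.1| (Real.exp ((ε - a) * |p.1|))) :=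
          mul_le_mul_of_nonneg_left (hpow _ (abs_nonneg _)) (by positivity)
      _ ≤ (‖c‖ * |D| * C + 1) * min |p.1| (Real.exp ((ε - a) * |p.1|)) := by
          rw [← mul_assoc]; gcongr; linarith
  | add _ _ ih₁ ih₂ =>
    obtain ⟨C₁, hC₁, h₁⟩ := ih₁
    obtain ⟨C₂, hC₂, h₂⟩ := ih₂
    refine ⟨C₁ + C₂, by positivity, fun p hp => ?_⟩
    rw [add_mul]
    exact (norm_add_le _ _).trans (add_le_add (h₁ p hp) (h₂ p hp))

end MonomialSum

theorem sliceKernel_eq_im {σ : ℝ} (hσ : 0 < σ) (t s : ℝ) :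
    sliceKernel σ t s = π / σ * (sinhInvDeriv 0 (sliceArg (π / (2 * σ)) s t)).im := by
  set x := π / (2 * σ) * s
  set y := π / (2 * σ) * t
  have hx : π * s / σ = 2 * x := by simp only [x]; field_simp
  have hy : π * t / σ = 2 * y := by simp only [y]; field_simp
  have hden :
      Real.cosh (2 * x) - Real.cos (2 * y) = 2 * (Real.sinh x ^ 2 + Real.sin y ^ 2) := by
    rw [Real.cosh_two_mul, Real.cos_two_mul]
    linear_combination Real.cosh_sq_sub_sinh_sq x - 2 * Real.sin_sq_add_cos_sq y
  have hx' : π * s / (2 * σ) = x := by simp only [x]; ring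
  have hy' : π * t / (2 * σ) = y := by simp only [y]; ring
  rw [sinhInvDeriv_zero, Complex.inv_im, Complex.normSq_eq_norm_sq, Complex.sq_norm_sinh,
    Complex.sinh_im, sliceKernel, hx, hy, hx', hy', hden]
  simp only [sliceArg_re, sliceArg_im, Real.sin_neg, neg_sq]
  rw [mul_comm 2 (_ + _), ← div_div]
  ring

theorem sinh_sliceArg_ne_zero {σ t : ℝ} (hσ : 0 < σ) (ht : t ∈ Set.Ioo 0 (2 * σ)) (s : ℝ) :
    Complex.sinh (sliceArg (π / (2 * σ)) s t) ≠ 0 := by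
  have hsin : 0 < Real.sin (π / (2 * σ) * t) := by
    apply Real.sin_pos_of_pos_of_lt_pi (by have := ht.1; positivity)
    calc π / (2 * σ) * t < π / (2 * σ) * (2 * σ) := by gcongr; exact ht.2
      _ = π := by field_simp
  rw [← norm_ne_zero_iff, ← pow_ne_zero_iff two_ne_zero, Complex.sq_norm_sinh, sliceArg_im,
    Real.sin_neg, neg_sq]
  positivity

def sliceRegion (σ δ : ℝ) : Set (ℝ × ℝ) :=
  {p | p.2 ∈ Set.Ioc 0 σ ∧ δ ^ 2 ≤ p.1 ^ 2 + p.2 ^ 2}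

theorem le_abs_or_sin_le_abs_sin_of_mem_sliceRegion {σ δ : ℝ} (hσ : 0 < σ) (hδ : 0 < δ)
    {p : ℝ × ℝ} (hp : p ∈ sliceRegion σ δ) :
    π / (2 * σ) * δ / 2 ≤ |π / (2 * σ) * p.1| ∨
      Real.sin (π / (2 * σ) * δ / 2) ≤ |Real.sin (π / (2 * σ) * p.2)| := by
  obtain ⟨⟨ht₀, htσ⟩, hst⟩ := hp
  have ha : 0 < π / (2 * σ) := by positivity
  rw [abs_mul, abs_of_pos ha, mul_div_assoc]
  rcases le_or_gt (δ / 2) |p.1| with hs | hs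
  · exact Or.inl (by gcongr)
  · right
    have ht : δ / 2 ≤ p.2 := by nlinarith [sq_abs p.1, abs_nonneg p.1]
    refine le_trans ?_ (le_abs_self _)
    apply Real.sin_le_sin_of_le_of_le_pi_div_two (by nlinarith [Real.pi_pos])
    · calc π / (2 * σ) * p.2 ≤ π / (2 * σ) * σ := by gcongr
        _ = π / 2 := by field_simp
    · gcongr

theorem exists_norm_sinhInvDeriv_sliceArg_le {σ δ : ℝ} (hσ : 0 < σ) (hδ : δ ∈ Set.Ioo 0 σ)
    (m : ℕ) :
    ∃ D, ∀ p ∈ sliceRegion σ δ, ‖sinhInvDeriv m (sliceArg (π / (2 * σ)) p.1 p.2)‖ ≤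
      D * Real.exp (-(π / (2 * σ) * |p.1|)) := by
  have ha : 0 < π / (2 * σ) := by positivity
  have hη : 0 < Real.sin (π / (2 * σ) * δ / 2) := by
    apply Real.sin_pos_of_pos_of_lt_pi (by have := hδ.1; positivity)
    calc π / (2 * σ) * δ / 2 < π / (2 * σ) * σ := by have := hδ.2; nlinarith
      _ = π / 2 := by field_simp
      _ < π := by linarith [Real.pi_pos]
  obtain ⟨c, hc, hsinh⟩ := Complex.exists_mul_exp_abs_re_le_norm_sinh
    (by have := hδ.1; positivity : 0 < π / (2 * σ) * δ / 2) hη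
  refine ⟨(∑ i ∈ Finset.range (m + 1), ‖(sinhInvDerivPoly m).coeff i‖) / c ^ (m + 1),
    fun p hp => ?_⟩
  have hre : |(sliceArg (π / (2 * σ)) p.1 p.2).re| = π / (2 * σ) * |p.1| := by
    rw [sliceArg_re, abs_mul, abs_of_pos ha]
  rw [← hre]
  refine norm_sinhInvDeriv_le hc m (hsinh _ ?_)
  simpa [Real.sin_neg, abs_neg] using le_abs_or_sin_le_abs_sin_of_mem_sliceRegion hσ hδ.1 hp

theorem exists_iteratedDeriv_iterate_Oop_sliceKernel_eq {σ : ℝ} (hσ : 0 < σ) {ℓ : ℕ}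
    (hℓ : ℓ ≤ 1) (k : ℕ) :
    ∃ g, IsMonomialSum sinhInvDeriv (π / (2 * σ)) 1 g ∧ ∀ s, ∀ t ∈ Set.Ioo 0 (2 * σ),
      iteratedDeriv ℓ (fun t' => Oop^[k + 1] (fun s' => sliceKernel σ t' s') s) t =
        (g s t).im := by
  have hF : ∀ m, ∀ z ∈ {z | Complex.sinh z ≠ 0},
      HasDerivAt (sinhInvDeriv m) (sinhInvDeriv (m + 1) z) z :=
    fun m _ hz => hasDerivAt_sinhInvDeriv m hz
  obtain ⟨g, hg, hiter⟩ := (IsMonomialSum.monomial (F := sinhInvDeriv) (a := π / (2 * σ))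
    (π / σ : ℂ) (j := 0) 0 le_rfl).exists_iterate_Oop_eq hF k
  have hrep : ∀ t ∈ Set.Ioo 0 (2 * σ),
      Oop^[k + 1] (fun s' => sliceKernel σ t s') = fun s => (g s t).im := by
    intro t ht
    rw [← hiter t (sinh_sliceArg_ne_zero hσ ht)]
    simp only [sliceKernel_eq_im hσ, pow_zero, mul_one, ← Complex.ofReal_div,
      Complex.im_ofReal_mul]
  interval_cases ℓ
  · exact ⟨g, hg, fun s t ht => by rw [iteratedDeriv_zero, hrep t ht]⟩
  · obtain ⟨g', hg', hd⟩ := hg.exists_hasDerivAt_right hF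
    refine ⟨g', hg', fun s t ht => ?_⟩
    have hev : (fun t' => Oop^[k + 1] (fun s' => sliceKernel σ t' s') s) =ᶠ[nhds t]
        fun t' => (g s t').im := by
      filter_upwards [isOpen_Ioo.mem_nhds ht] with t' ht' using congrFun (hrep t' ht') s
    have him : HasDerivAt (fun t' => (g s t').im) (g' s t).im t :=
      Complex.imCLM.hasFDerivAt.comp_hasDerivAt t (hd s t (sinh_sliceArg_ne_zero hσ ht s))
    rw [iteratedDeriv_one, hev.deriv_eq, him.deriv]

/-- For `δ ∈ (0, σ)`, `ε ∈ (0, λ₁)` with `λ₁ = π/(2σ)`, `ℓ ∈ {0,1}` and an integer `k ≥ 1`,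
the `k`-th iterate of `O = s∂ₛ` applied to `K_t`, differentiated `ℓ` times in `t`,
satisfies `|∂_t^ℓ (O^k K_t)(s)| ≤ C min(|s|, e^{(ε−λ₁)|s|})` on
`S_δ = {(s,t) ∈ ℝ × (0,σ] : s² + t² ≥ δ²}`. -/
theorem sliceKernel_iterated_O_deriv_bound (σ : ℝ) (hσ : 0 < σ) (δ ε : ℝ)
    (hδ : δ ∈ Set.Ioo 0 σ) (hε : ε ∈ Set.Ioo 0 (π / (2 * σ)))
    (ℓ k : ℕ) (hℓ : ℓ ≤ 1) (hk : 1 ≤ k) :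
    ∃ C : ℝ, 0 < C ∧ ∀ s t : ℝ, t ∈ Set.Ioc 0 σ → δ ^ 2 ≤ s ^ 2 + t ^ 2 →
      |iteratedDeriv ℓ (fun t' => Oop^[k] (fun s' => sliceKernel σ t' s') s) t| ≤
        C * min |s| (Real.exp ((ε - π / (2 * σ)) * |s|)) := by
  obtain ⟨k, rfl⟩ : ∃ k', k = k' + 1 := ⟨k - 1, by omega⟩
  obtain ⟨g, hg, hrep⟩ := exists_iteratedDeriv_iterate_Oop_sliceKernel_eq hσ hℓ k
  obtain ⟨C, hC, hbound⟩ := hg.exists_norm_le_min (by positivity) hε.1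
    (exists_norm_sinhInvDeriv_sliceArg_le hσ hδ)
  refine ⟨C, hC, fun s t ht hst => ?_⟩
  rw [hrep s t ⟨ht.1, by linarith [ht.2]⟩]
  exact (Complex.abs_im_le_norm _).trans (hbound (s, t) ⟨ht, hst⟩)
end

section
/- Let σ > 0, t ∈ (0, σ], and φ ∈ (0, π/2). With M_t^ε and M_t as defined in the context, sup_{z : z = 0 or |arg z| ≤ φ} |M_t^ε(z) − M_t(z)| tends to 0 as ε → 0⁺; that is, for every η > 0 there exists ε₀ ∈ (0, t/2) such that for all ε ∈ (0, ε₀) and all z ∈ ℂ with z = 0 or |arg z| ≤ φ, one has |M_t^ε(z) − M_t(z)| ≤ η. -/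
/-!
On the sector `Re w ≥ cos φ ‖w‖` one has `‖cosh w‖ ≥ c exp (Re w)` for some `c > 0`: near the
origin through `Re (cosh w) = cosh (Re w) cos (Im w)`, far from it through
`‖cosh w‖ ≥ sinh (Re w)`. Writing `M_t^ε − M_t` as
`cosh((t−σ)z) (cosh(σz) − cosh((σ−ε)z)) / (cosh((σ−ε)z) cosh(σz))` and bounding the middle
factor by the mean value theorem gives `‖M_t^ε(z) − M_t(z)‖ ≤ ε ‖z‖ exp((ε−t) Re z) / c²`,
and `‖z‖ exp(-(t/2) cos φ ‖z‖)` is bounded uniformly in `z`.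
-/

open Real Complex

/-- The holomorphic function `M_t^ε(z) = cosh((t−σ)z)/cosh((σ−ε)z)`. -/
noncomputable def Mfun (σ t ε : ℝ) (z : ℂ) : ℂ :=
  Complex.cosh ((↑t - ↑σ) * z) / Complex.cosh ((↑σ - ↑ε) * z)

namespace Complex

lemma norm_exp_add_norm_exp_neg_le (w : ℂ) : ‖exp w‖ + ‖exp (-w)‖ ≤ 2 * Real.exp |w.re| := by
  rw [norm_exp, norm_exp, neg_re, two_mul]
  gcongr <;> [exact le_abs_self _; exact neg_le_abs _]

lemma norm_cosh_le_exp_abs_re_s5 (w : ℂ) : ‖cosh w‖ ≤ Real.exp |w.re| := by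
  rw [cosh, norm_div, Complex.norm_two, div_le_iff₀ two_pos, mul_comm]
  exact (norm_add_le _ _).trans (norm_exp_add_norm_exp_neg_le w)

lemma norm_sinh_le_exp_abs_re (w : ℂ) : ‖sinh w‖ ≤ Real.exp |w.re| := by
  rw [sinh, norm_div, Complex.norm_two, div_le_iff₀ two_pos, mul_comm]
  exact (norm_sub_le _ _).trans (norm_exp_add_norm_exp_neg_le w)

lemma norm_cosh_sub_cosh_le {R : ℝ} {a b : ℂ} (ha : |a.re| ≤ R) (hb : |b.re| ≤ R) :
    ‖cosh b - cosh a‖ ≤ Real.exp R * ‖b - a‖ := by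
  have hconvex : Convex ℝ (reLm ⁻¹' Set.Icc (-R) R) := (convex_Icc (-R) R).linear_preimage _
  refine hconvex.norm_image_sub_le_of_norm_hasDerivWithin_le
    (fun w _ => (hasDerivAt_cosh w).hasDerivWithinAt) (fun w hw => ?_)
    (abs_le.mp ha) (abs_le.mp hb)
  exact (norm_sinh_le_exp_abs_re w).trans (Real.exp_le_exp.mpr (abs_le.mpr hw))

lemma cosh_re (w : ℂ) : (cosh w).re = Real.cosh w.re * Real.cos w.im := by
  conv_lhs => rw [← re_add_im w]
  rw [cosh_add, cosh_mul_I, sinh_mul_I]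
  simp [← ofReal_cosh, ← ofReal_sinh, ← ofReal_cos, ← ofReal_sin]

lemma cos_one_div_two_mul_exp_re_le_norm_cosh {w : ℂ} (hw : ‖w‖ ≤ 1) :
    Real.cos 1 / 2 * Real.exp w.re ≤ ‖cosh w‖ := by
  have hcos : Real.cos 1 ≤ Real.cos w.im := by
    rw [← Real.cos_abs w.im]
    exact Real.cos_le_cos_of_nonneg_of_le_pi (abs_nonneg _) (by linarith [Real.pi_gt_three])
      ((abs_im_le_norm w).trans hw)
  have hcosh : Real.exp w.re / 2 ≤ Real.cosh w.re := by
    rw [Real.cosh_eq]; linarith [Real.exp_pos (-w.re)]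
  calc Real.cos 1 / 2 * Real.exp w.re = (Real.exp w.re / 2) * Real.cos 1 := by ring
    _ ≤ Real.cosh w.re * Real.cos w.im := by
      have := Real.cos_one_pos
      gcongr
    _ = (cosh w).re := (cosh_re w).symm
    _ ≤ ‖cosh w‖ := re_le_norm _

lemma one_sub_exp_neg_two_mul_div_two_mul_exp_re_le_norm_cosh {s : ℝ} {w : ℂ} (hw : s ≤ w.re) :
    (1 - Real.exp (-(2 * s))) / 2 * Real.exp w.re ≤ ‖cosh w‖ := by
  have hsub : ‖exp w‖ - ‖exp (-w)‖ ≤ ‖exp w + exp (-w)‖ := by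
    simpa using norm_sub_norm_le (exp w) (-exp (-w))
  have hdecay : Real.exp (-(2 * s)) * Real.exp w.re ≥ Real.exp (-w.re) := by
    rw [← Real.exp_add]; exact Real.exp_le_exp.mpr (by linarith)
  rw [norm_exp, norm_exp, neg_re] at hsub
  rw [cosh, norm_div, Complex.norm_two]
  linarith

lemma exists_pos_mul_exp_re_le_norm_cosh {δ : ℝ} (hδ : 0 < δ) :
    ∃ c > 0, ∀ w : ℂ, δ * ‖w‖ ≤ w.re → c * Real.exp w.re ≤ ‖cosh w‖ := by
  refine ⟨min (Real.cos 1 / 2) ((1 - Real.exp (-(2 * δ))) / 2), ?_, fun w hw => ?_⟩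
  · have : Real.exp (-(2 * δ)) < 1 := Real.exp_lt_one_iff.mpr (by linarith)
    have := Real.cos_one_pos
    apply lt_min <;> linarith
  rcases le_total ‖w‖ 1 with hsmall | hlarge
  · exact (mul_le_mul_of_nonneg_right (min_le_left _ _) (Real.exp_pos _).le).trans
      (cos_one_div_two_mul_exp_re_le_norm_cosh hsmall)
  · have : δ ≤ w.re := by nlinarith
    exact (mul_le_mul_of_nonneg_right (min_le_right _ _) (Real.exp_pos _).le).trans
      (one_sub_exp_neg_two_mul_div_two_mul_exp_re_le_norm_cosh this)

lemma cos_mul_norm_le_re_of_abs_arg_le {z : ℂ} {φ : ℝ} (hφ : φ ≤ π) (hz : |z.arg| ≤ φ) :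
    Real.cos φ * ‖z‖ ≤ z.re := by
  rw [← norm_mul_cos_arg z, ← Real.cos_abs z.arg, mul_comm]
  gcongr
  exact Real.cos_le_cos_of_nonneg_of_le_pi (abs_nonneg _) hφ hz

end Complex

lemma Real.mul_exp_neg_mul_le {k : ℝ} (hk : 0 < k) (r : ℝ) : r * Real.exp (-(k * r)) ≤ 1 / k := by
  rw [le_div_iff₀ hk, Real.exp_neg]
  have := Real.add_one_le_exp (k * r)
  have := Real.exp_pos (k * r)
  rw [mul_comm, ← mul_assoc, mul_inv_le_iff₀ this]
  linarith

lemma norm_Mfun_sub_Mfun_zero_le {σ t ε δ c : ℝ} (hc : 0 < c)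
    (hcosh : ∀ w : ℂ, δ * ‖w‖ ≤ w.re → c * Real.exp w.re ≤ ‖Complex.cosh w‖)
    (htσ : t ≤ σ) (hε : 0 ≤ ε) (hεσ : ε ≤ σ) {z : ℂ} (hδ : 0 ≤ δ) (hz : δ * ‖z‖ ≤ z.re) :
    ‖Mfun σ t ε z - Mfun σ t 0 z‖ ≤ ε * (‖z‖ * Real.exp ((ε - t) * z.re)) / c ^ 2 := by
  have hx : 0 ≤ z.re := (mul_nonneg hδ (norm_nonneg z)).trans hz
  have hcosh_mul : ∀ a : ℝ, 0 ≤ a → c * Real.exp (a * z.re) ≤ ‖Complex.cosh (a * z)‖ := by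
    intro a ha
    simpa using hcosh (a * z) (by simpa [norm_mul, abs_of_nonneg ha, mul_left_comm δ a]
      using mul_le_mul_of_nonneg_left hz ha)
  have hD₁ := hcosh_mul (σ - ε) (by linarith)
  have hD₀ := hcosh_mul σ (by linarith)
  push_cast at hD₁
  have hN : ‖Complex.cosh ((t - σ) * z)‖ ≤ Real.exp ((σ - t) * z.re) := by
    refine (Complex.norm_cosh_le_exp_abs_re_s5 _).trans (Real.exp_le_exp.mpr (le_of_eq ?_))
    simp only [Complex.mul_re, Complex.sub_re, Complex.sub_im, Complex.ofReal_re,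
      Complex.ofReal_im, sub_zero, zero_mul]
    rw [abs_of_nonpos (mul_nonpos_of_nonpos_of_nonneg (by linarith) hx)]
    ring
  have hdiff : ‖Complex.cosh (σ * z) - Complex.cosh ((σ - ε) * z)‖ ≤
      Real.exp (σ * z.re) * (ε * ‖z‖) := by
    have hre : ∀ a : ℝ, 0 ≤ a → |((a : ℂ) * z).re| = a * z.re := fun a ha => by
      simp [abs_of_nonneg (mul_nonneg ha hx)]
    have := Complex.norm_cosh_sub_cosh_le (R := σ * z.re) (a := ((σ - ε : ℝ) : ℂ) * z)
      (b := σ * z) (by rw [hre _ (by linarith)]; nlinarith) (hre σ (by linarith)).le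
    simpa [← sub_mul, norm_mul, abs_of_nonneg hε] using this
  have hD₁pos : 0 < ‖Complex.cosh ((σ - ε) * z)‖ := (by positivity : (0:ℝ) < _).trans_le hD₁
  have hD₀pos : 0 < ‖Complex.cosh (σ * z)‖ := (by positivity : (0:ℝ) < _).trans_le hD₀
  have hsplit : Mfun σ t ε z - Mfun σ t 0 z =
      Complex.cosh ((t - σ) * z) * (Complex.cosh (σ * z) - Complex.cosh ((σ - ε) * z)) /
        (Complex.cosh ((σ - ε) * z) * Complex.cosh (σ * z)) := by
    rw [Mfun, Mfun, Complex.ofReal_zero, sub_zero,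
      div_sub_div _ _ (norm_pos_iff.mp hD₁pos) (norm_pos_iff.mp hD₀pos)]
    ring
  rw [hsplit, norm_div, norm_mul, norm_mul,
    div_le_div_iff₀ (mul_pos hD₁pos hD₀pos) (by positivity)]
  calc ‖Complex.cosh ((t - σ) * z)‖ * ‖Complex.cosh (σ * z) - Complex.cosh ((σ - ε) * z)‖ *
        c ^ 2
      ≤ Real.exp ((σ - t) * z.re) * (Real.exp (σ * z.re) * (ε * ‖z‖)) * c ^ 2 := by gcongr
    _ = ε * (‖z‖ * Real.exp ((ε - t) * z.re)) *
          ((c * Real.exp ((σ - ε) * z.re)) * (c * Real.exp (σ * z.re))) := by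
      rw [show (σ - t) * z.re = (ε - t) * z.re + (σ - ε) * z.re by ring, Real.exp_add]
      ring
    _ ≤ ε * (‖z‖ * Real.exp ((ε - t) * z.re)) *
          (‖Complex.cosh ((σ - ε) * z)‖ * ‖Complex.cosh (σ * z)‖) := by gcongr

theorem Mfun_uniform_convergence_on_sector_general (σ t φ : ℝ)
    (ht : t ∈ Set.Ioc 0 σ) (hφ : φ ∈ Set.Ioo 0 (π / 2)) :
    ∀ η : ℝ, 0 < η → ∃ ε₀ : ℝ, 0 < ε₀ ∧ ε₀ < t / 2 ∧
      ∀ ε ∈ Set.Ioo (0 : ℝ) ε₀, ∀ z : ℂ, (z = 0 ∨ |z.arg| ≤ φ) →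
        ‖Mfun σ t ε z - Mfun σ t 0 z‖ ≤ η := by
  intro η hη
  obtain ⟨ht0, htσ⟩ := ht
  have hδ : 0 < Real.cos φ := Real.cos_pos_of_mem_Ioo ⟨by linarith [hφ.1, Real.pi_pos], hφ.2⟩
  obtain ⟨c, hc, hcosh⟩ := Complex.exists_pos_mul_exp_re_le_norm_cosh hδ
  set k := t / 2 * Real.cos φ
  have hk : 0 < k := by positivity
  refine ⟨min (t / 4) (η * c ^ 2 * k), by positivity,
    (min_le_left _ _).trans_lt (by linarith), ?_⟩
  rintro ε ⟨hε, hεε₀⟩ z hz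
  have hεt : ε ≤ t / 4 := hεε₀.le.trans (min_le_left _ _)
  have hsector : Real.cos φ * ‖z‖ ≤ z.re := by
    rcases hz with rfl | harg
    · simp
    · exact Complex.cos_mul_norm_le_re_of_abs_arg_le (by linarith [hφ.2, Real.pi_pos]) harg
  have hdecay : ‖z‖ * Real.exp ((ε - t) * z.re) ≤ 1 / k :=
    calc ‖z‖ * Real.exp ((ε - t) * z.re) ≤ ‖z‖ * Real.exp (-(k * ‖z‖)) := by
          gcongr
          have hx : 0 ≤ z.re := (mul_nonneg hδ.le (norm_nonneg z)).trans hsector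
          calc (ε - t) * z.re ≤ -(t / 2) * z.re :=
                mul_le_mul_of_nonneg_right (by linarith) hx
            _ ≤ -(t / 2) * (Real.cos φ * ‖z‖) := mul_le_mul_of_nonpos_left hsector (by linarith)
            _ = -(k * ‖z‖) := by ring
      _ ≤ 1 / k := Real.mul_exp_neg_mul_le hk _
  calc ‖Mfun σ t ε z - Mfun σ t 0 z‖
      ≤ ε * (‖z‖ * Real.exp ((ε - t) * z.re)) / c ^ 2 :=
        norm_Mfun_sub_Mfun_zero_le hc hcosh htσ hε.le (by linarith) hδ.le hsector
    _ ≤ (η * c ^ 2 * k) * (1 / k) / c ^ 2 := by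
        gcongr; exact hεε₀.le.trans (min_le_right _ _)
    _ = η := by field_simp

/-- For `σ > 0`, `t ∈ (0, σ]` and `φ ∈ (0, π/2)`,
`sup_{z = 0 or |arg z| ≤ φ} |M_t^ε(z) − M_t(z)| → 0` as `ε → 0⁺`. -/
theorem Mfun_uniform_convergence_on_sector (σ t φ : ℝ) (hσ : 0 < σ)
    (ht : t ∈ Set.Ioc 0 σ) (hφ : φ ∈ Set.Ioo 0 (π / 2)) :
    ∀ η : ℝ, 0 < η → ∃ ε₀ : ℝ, 0 < ε₀ ∧ ε₀ < t / 2 ∧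
      ∀ ε ∈ Set.Ioo (0 : ℝ) ε₀, ∀ z : ℂ, (z = 0 ∨ |z.arg| ≤ φ) →
        ‖Mfun σ t ε z - Mfun σ t 0 z‖ ≤ η :=
  Mfun_uniform_convergence_on_sector_general σ t φ ht hφ
end

section
/- Let σ > 0 and φ ∈ (0, π/2). Then the function g₁(z) := (1 − e^{−2σz}) / (e^{σz} + e^{−σz}) belongs to H₀^∞(S_φ); that is, g₁ is holomorphic on the open sector S_φ and there exist constants C > 0 and s > 0 such that |g₁(z)| ≤ C · |z|^s / (1 + |z|^{2s}) for all z ∈ S_φ. -/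
open Real Complex

/-- The open sector `S_φ = {z ∈ ℂ ∖ {0} : |arg z| < φ}`. -/
def sector (φ : ℝ) : Set ℂ := {z : ℂ | z ≠ 0 ∧ |z.arg| < φ}

/-!
With `s = 1`, membership in `H₀^∞` follows from two estimates: `g₁(z) = O(z)` at the origin,
because `g₁` is holomorphic there with `g₁(0) = 0`, and `‖g₁(z)‖ ‖z‖` is bounded on the
sector, because `|e^w + e^{-w}| ≥ 2 sinh (Re w) ≥ 2 Re w` while `|1 - e^{-2w}| ≤ 2` for
`Re w ≥ 0`, and `Re z ≥ |z| cos φ` on `S_φ`.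
-/

open Filter Topology Asymptotics

lemma le_mul_div_one_add_sq {x r A B : ℝ} (hr : 0 ≤ r) (hA : x ≤ A * r) (hB : x * r ≤ B) :
    x ≤ (A + B) * r / (1 + r ^ 2) := by
  rw [le_div_iff₀ (by positivity)]
  nlinarith

lemma exists_pos_norm_le_mul_norm_div_one_add_sq {E F : Type*} [NormedAddCommGroup E]
    [NormedAddCommGroup F] {g : E → F} {S : Set E} {B : ℝ} (hzero : g =O[𝓝 0] id)
    (hB : 0 ≤ B) (hdecay : ∀ z ∈ S, ‖g z‖ * ‖z‖ ≤ B) :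
    ∃ C, 0 < C ∧ ∀ z ∈ S, ‖g z‖ ≤ C * ‖z‖ / (1 + ‖z‖ ^ 2) := by
  obtain ⟨A, hA, hAg⟩ := hzero.exists_pos
  obtain ⟨ε, hε, hsmall⟩ := Metric.eventually_nhds_iff.1 hAg.bound
  have hlin : ∀ z ∈ S, ‖g z‖ ≤ max A (B / ε ^ 2) * ‖z‖ := by
    intro z hz
    rcases lt_or_ge ‖z‖ ε with hzε | hzε
    · calc ‖g z‖ ≤ A * ‖z‖ := hsmall (by simpa using hzε)
        _ ≤ max A (B / ε ^ 2) * ‖z‖ := by gcongr; exact le_max_left _ _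
    · calc ‖g z‖ ≤ B / ε ^ 2 * ‖z‖ := by
            rw [div_mul_eq_mul_div, le_div_iff₀ (by positivity)]
            calc ‖g z‖ * ε ^ 2 ≤ ‖g z‖ * ‖z‖ * ‖z‖ := by
                  rw [mul_assoc, ← sq]; gcongr
              _ ≤ B * ‖z‖ := by gcongr; exact hdecay z hz
        _ ≤ max A (B / ε ^ 2) * ‖z‖ := by gcongr; exact le_max_right _ _
  exact ⟨max A (B / ε ^ 2) + B, by positivity,
    fun z hz => le_mul_div_one_add_sq (norm_nonneg z) (hlin z hz) (hdecay z hz)⟩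

lemma norm_mul_cos_le_re_of_mem_sector {φ : ℝ} (hφ : φ ≤ π) {z : ℂ} (hz : z ∈ sector φ) :
    ‖z‖ * Real.cos φ ≤ z.re := by
  rw [← norm_mul_cos_arg z, ← Real.cos_abs z.arg]
  gcongr
  exact Real.cos_le_cos_of_nonneg_of_le_pi (abs_nonneg _) hφ hz.2.le

lemma cos_pos_of_mem_sector {φ : ℝ} (hφ : φ < π / 2) {z : ℂ} (hz : z ∈ sector φ) :
    0 < Real.cos φ :=
  Real.cos_pos_of_mem_Ioo ⟨by linarith [abs_nonneg z.arg, hz.2, pi_pos], hφ⟩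

lemma re_pos_of_mem_sector {φ : ℝ} (hφ : φ < π / 2) {z : ℂ} (hz : z ∈ sector φ) :
    0 < z.re :=
  (mul_pos (norm_pos_iff.2 hz.1) (cos_pos_of_mem_sector hφ hz)).trans_le
    (norm_mul_cos_le_re_of_mem_sector (by linarith [pi_pos]) hz)

/-- `g₁` for `σ = 1`; the general one is `z ↦ g1 (σ * z)`. -/
noncomputable def g1 (w : ℂ) : ℂ := (1 - cexp (-(2 * w))) / (cexp w + cexp (-w))

lemma two_mul_sinh_re_le_norm_exp_add_exp_neg (w : ℂ) :
    2 * Real.sinh w.re ≤ ‖cexp w + cexp (-w)‖ := by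
  have h := norm_sub_norm_le (cexp w) (-cexp (-w))
  rw [sub_neg_eq_add, norm_neg, Complex.norm_exp, Complex.norm_exp, neg_re] at h
  rw [Real.sinh_eq]
  linarith

lemma exp_add_exp_neg_ne_zero {w : ℂ} (hw : 0 < w.re) : cexp w + cexp (-w) ≠ 0 :=
  norm_pos_iff.1 <| (mul_pos two_pos (Real.sinh_pos_iff.2 hw)).trans_le
    (two_mul_sinh_re_le_norm_exp_add_exp_neg w)

lemma norm_one_sub_exp_neg_le_two {u : ℂ} (hu : 0 ≤ u.re) : ‖1 - cexp (-u)‖ ≤ 2 := by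
  calc ‖1 - cexp (-u)‖ ≤ ‖(1 : ℂ)‖ + ‖cexp (-u)‖ := norm_sub_le _ _
    _ ≤ 2 := by
      rw [norm_one, Complex.norm_exp, neg_re]
      linarith [Real.exp_le_one_iff.2 (neg_nonpos.2 hu)]

lemma norm_g1_mul_re_le_one {w : ℂ} (hw : 0 < w.re) : ‖g1 w‖ * w.re ≤ 1 := by
  have hden : 2 * w.re ≤ ‖cexp w + cexp (-w)‖ :=
    le_trans (by gcongr; exact Real.self_le_sinh_iff.2 hw.le)
      (two_mul_sinh_re_le_norm_exp_add_exp_neg w)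
  have hnum : ‖1 - cexp (-(2 * w))‖ ≤ 2 :=
    norm_one_sub_exp_neg_le_two (by simpa using hw.le)
  rw [g1, norm_div, div_mul_eq_mul_div, div_le_one (by linarith)]
  nlinarith [norm_nonneg (1 - cexp (-(2 * w)))]

lemma differentiableAt_g1 {w : ℂ} (hw : cexp w + cexp (-w) ≠ 0) : DifferentiableAt ℂ g1 w :=
  DifferentiableAt.div (by fun_prop) (by fun_prop) hw

lemma isBigO_g1_comp_mul (σ : ℂ) : (fun z => g1 (σ * z)) =O[𝓝 0] id := by
  have hd : DifferentiableAt ℂ (fun z => g1 (σ * z)) 0 :=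
    (differentiableAt_g1 (by norm_num)).comp (0 : ℂ) (by fun_prop)
  have hzero : g1 (σ * 0) = 0 := by simp [g1]
  exact hd.isBigO_sub.congr (fun z => by rw [hzero, sub_zero]) sub_zero

lemma differentiableOn_g1_comp_mul {σ φ : ℝ} (hσ : 0 < σ) (hφ : φ < π / 2) :
    DifferentiableOn ℂ (fun z => g1 (σ * z)) (sector φ) := fun z hz =>
  ((differentiableAt_g1 (exp_add_exp_neg_ne_zero (by
    rw [re_ofReal_mul]; exact mul_pos hσ (re_pos_of_mem_sector hφ hz)))).comp z
    (by fun_prop)).differentiableWithinAt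

lemma norm_g1_comp_mul_mul_norm_le {σ φ : ℝ} (hσ : 0 < σ) (hφ : φ < π / 2)
    {z : ℂ} (hz : z ∈ sector φ) : ‖g1 (σ * z)‖ * ‖z‖ ≤ 1 / (σ * Real.cos φ) := by
  have hcos := cos_pos_of_mem_sector hφ hz
  have hre : σ * (‖z‖ * Real.cos φ) ≤ (σ * z).re := by
    rw [re_ofReal_mul]
    gcongr
    exact norm_mul_cos_le_re_of_mem_sector (by linarith [pi_pos]) hz
  have hpos : 0 < σ * (‖z‖ * Real.cos φ) := by
    have := norm_pos_iff.2 hz.1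
    positivity
  rw [le_div_iff₀ (by positivity)]
  calc ‖g1 (σ * z)‖ * ‖z‖ * (σ * Real.cos φ) = ‖g1 (σ * z)‖ * (σ * (‖z‖ * Real.cos φ)) := by
        ring
    _ ≤ ‖g1 (σ * z)‖ * (σ * z).re := by gcongr
    _ ≤ 1 := norm_g1_mul_re_le_one (hpos.trans_le hre)

/-- For `σ > 0` and `φ ∈ (0, π/2)`, the function
`g₁(z) = (1 − e^{−2σz})/(e^{σz} + e^{−σz})` belongs to `H₀^∞(S_φ)`: it is holomorphic
on the sector `S_φ` and satisfies `|g₁(z)| ≤ C |z|^s/(1 + |z|^{2s})` there. -/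
theorem g1_mem_H0infty (σ φ : ℝ) (hσ : 0 < σ) (hφ : φ ∈ Set.Ioo 0 (π / 2)) :
    DifferentiableOn ℂ
      (fun z : ℂ => (1 - Complex.exp (-(2 * ↑σ * z))) /
        (Complex.exp (↑σ * z) + Complex.exp (-(↑σ * z)))) (sector φ) ∧
    ∃ C s : ℝ, 0 < C ∧ 0 < s ∧ ∀ z ∈ sector φ,
      ‖(1 - Complex.exp (-(2 * ↑σ * z))) /
          (Complex.exp (↑σ * z) + Complex.exp (-(↑σ * z)))‖ ≤
        C * ‖z‖ ^ s / (1 + ‖z‖ ^ (2 * s)) := by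
  have hg (z : ℂ) : (1 - Complex.exp (-(2 * ↑σ * z))) /
      (Complex.exp (↑σ * z) + Complex.exp (-(↑σ * z))) = g1 (σ * z) := by
    rw [g1, mul_assoc]
  simp only [hg]
  have hcos : 0 < Real.cos φ := Real.cos_pos_of_mem_Ioo ⟨by linarith [hφ.1, pi_pos], hφ.2⟩
  obtain ⟨C, hC, hbound⟩ := exists_pos_norm_le_mul_norm_div_one_add_sq (isBigO_g1_comp_mul σ)
    (by positivity) fun z hz => norm_g1_comp_mul_mul_norm_le hσ hφ.2 hz
  refine ⟨differentiableOn_g1_comp_mul hσ hφ.2, C, 1, hC, one_pos, fun z hz => ?_⟩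
  simpa [Real.rpow_two] using hbound z hz
end

section
/- Let τ > 0 and φ ∈ (0, π). Then the function f(z) := 1/√(τ + z) − 1/(√z + √(τ + z)), where √ denotes the principal branch of the complex square root, belongs to H₀^∞(S_φ); that is, f is holomorphic on the open sector S_φ and there exist constants C > 0 and s > 0 such that |f(z)| ≤ C · |z|^s / (1 + |z|^{2s}) for all z ∈ S_φ. (In particular one may take s = 1/2.) -/
/-!
On the sector, `f(z) = √z / (√(τ + z) (√z + √(τ + z)))`. Both `z` and `τ + z` lie in `S_φ`, so
their square roots lie in `S_{φ/2}`, where the real part controls the norm: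
`‖√z + √(τ + z)‖ ≥ cos(φ/2) ‖τ + z‖^{1/2}`. Together with the law-of-cosines bound
`‖τ + z‖ ≥ cos(φ/2) (τ + ‖z‖)` this gives `‖f(z)‖ ≤ C ‖z‖^{1/2} / (1 + ‖z‖)`, i.e. `s = 1/2`.
Holomorphy holds on the whole slit plane, where principal square roots have positive real part.
-/

open Real Complex

lemma mul_sqrt_sq_add_sq_le {x y : ℝ} (b : ℝ) (hxy : x ≤ y) :
    x * √(y ^ 2 + b ^ 2) ≤ y * √(x ^ 2 + b ^ 2) := by
  have of_nonneg : ∀ {x y : ℝ}, 0 ≤ x → x ≤ y → x * √(y ^ 2 + b ^ 2) ≤ y * √(x ^ 2 + b ^ 2) := by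
    intro x y hx hxy
    have hsq : x ^ 2 * b ^ 2 ≤ y ^ 2 * b ^ 2 :=
      mul_le_mul_of_nonneg_right (pow_le_pow_left₀ hx hxy 2) (sq_nonneg b)
    calc x * √(y ^ 2 + b ^ 2) = √(x ^ 2 * (y ^ 2 + b ^ 2)) := by
          rw [Real.sqrt_mul (sq_nonneg x), Real.sqrt_sq hx]
      _ ≤ √(y ^ 2 * (x ^ 2 + b ^ 2)) := Real.sqrt_le_sqrt (by linarith)
      _ = y * √(x ^ 2 + b ^ 2) := by rw [Real.sqrt_mul (sq_nonneg y), Real.sqrt_sq (hx.trans hxy)]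
  rcases le_total 0 x with hx | hx
  · exact of_nonneg hx hxy
  rcases le_total 0 y with hy | hy
  · exact (mul_nonpos_of_nonpos_of_nonneg hx (Real.sqrt_nonneg _)).trans
      (mul_nonneg hy (Real.sqrt_nonneg _))
  · have := of_nonneg (neg_nonneg.2 hy) (neg_le_neg hxy)
    rw [neg_sq, neg_sq] at this
    linarith

-- Cross-multiplied form of `cos (arg z) ≤ cos (arg (τ + z))`.
lemma re_mul_norm_ofReal_add_le (z : ℂ) {τ : ℝ} (hτ : 0 ≤ τ) :
    z.re * ‖(τ : ℂ) + z‖ ≤ ((τ : ℂ) + z).re * ‖z‖ := by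
  simp only [norm_eq_sqrt_sq_add_sq, add_re, add_im, ofReal_re, ofReal_im, zero_add]
  exact mul_sqrt_sq_add_sq_le _ (by linarith)

lemma mem_sector_iff {φ : ℝ} (h0 : 0 ≤ φ) (hπ : φ ≤ π) {z : ℂ} :
    z ∈ sector φ ↔ ‖z‖ * Real.cos φ < z.re := by
  rcases eq_or_ne z 0 with rfl | hz
  · simp [sector]
  show z ≠ 0 ∧ |z.arg| < φ ↔ _
  rw [← norm_mul_cos_arg, ← Real.cos_abs z.arg, mul_lt_mul_iff_right₀ (norm_pos_iff.2 hz),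
    (Real.strictAntiOn_cos).lt_iff_gt ⟨h0, hπ⟩ ⟨abs_nonneg _, abs_arg_le_pi z⟩]
  exact and_iff_right hz

lemma sector_subset_slitPlane {φ : ℝ} (hπ : φ ≤ π) : sector φ ⊆ slitPlane := by
  rintro z ⟨hz, harg⟩
  refine mem_slitPlane_iff_arg.2 ⟨fun h => ?_, hz⟩
  rw [h, abs_of_pos pi_pos] at harg
  linarith

lemma ofReal_add_mem_slitPlane {τ : ℝ} (hτ : 0 ≤ τ) {z : ℂ} (hz : z ∈ slitPlane) :
    (τ : ℂ) + z ∈ slitPlane := by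
  rw [mem_slitPlane_iff] at hz ⊢
  simp only [add_re, add_im, ofReal_re, ofReal_im, zero_add]
  exact hz.imp (fun h => by linarith) id

lemma ofReal_add_mem_sector {φ τ : ℝ} (h0 : 0 ≤ φ) (hπ : φ ≤ π) (hτ : 0 ≤ τ) {z : ℂ}
    (hz : z ∈ sector φ) : (τ : ℂ) + z ∈ sector φ := by
  rw [mem_sector_iff h0 hπ] at hz ⊢
  have hz0 : 0 < ‖z‖ := norm_pos_iff.2 fun h => by simp [h] at hz
  have hw0 : 0 < ‖(τ : ℂ) + z‖ := by
    refine norm_pos_iff.2 fun h => ?_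
    have hzτ : z = -τ := by linear_combination h
    have := Real.neg_one_le_cos φ
    simp only [hzτ, norm_neg, norm_real, Real.norm_eq_abs, abs_of_nonneg hτ, neg_re,
      ofReal_re] at hz
    nlinarith
  have := re_mul_norm_ofReal_add_le z hτ
  have := mul_lt_mul_of_pos_right hz hw0
  nlinarith

lemma norm_cpow_half (w : ℂ) : ‖w ^ (1 / 2 : ℂ)‖ = √‖w‖ := by
  rw [Real.sqrt_eq_rpow, ← norm_cpow_real]
  norm_num

lemma cpow_half_mem_sector {φ : ℝ} (h0 : 0 ≤ φ) (hπ : φ ≤ π) {z : ℂ} (hz : z ∈ sector φ) :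
    z ^ (1 / 2 : ℂ) ∈ sector (φ / 2) := by
  rw [mem_sector_iff h0 hπ] at hz
  rw [mem_sector_iff (by linarith) (by linarith [pi_pos]), norm_cpow_half, one_div,
    cpow_inv_two_re, Real.cos_half (by linarith [pi_pos]) hπ,
    ← Real.sqrt_mul (norm_nonneg z)]
  exact Real.sqrt_lt_sqrt (by nlinarith [norm_nonneg z, Real.neg_one_le_cos φ]) (by linarith)

lemma re_cpow_half_pos {z : ℂ} (hz : z ∈ slitPlane) : 0 < (z ^ (1 / 2 : ℂ)).re := by
  rw [one_div, cpow_inv_two_re, Real.sqrt_pos]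
  rcases mem_slitPlane_iff.1 hz with hre | him
  · linarith [norm_nonneg z]
  · linarith [neg_abs_le z.re, abs_re_lt_norm.2 him]

lemma cos_mul_add_norm_lt_norm_add {ψ : ℝ} (h0 : 0 ≤ ψ) (hπ : ψ ≤ π) {w₁ w₂ : ℂ}
    (hw₁ : w₁ ∈ sector ψ) (hw₂ : w₂ ∈ sector ψ) :
    Real.cos ψ * (‖w₁‖ + ‖w₂‖) < ‖w₁ + w₂‖ := by
  rw [mem_sector_iff h0 hπ] at hw₁ hw₂
  linarith [re_le_norm (w₁ + w₂), add_re w₁ w₂]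

/- Law of cosines: `‖τ + z‖² ≥ τ² + 2τ‖z‖ cos φ + ‖z‖²`, which exceeds `cos²(φ/2) (τ + ‖z‖)²`
by `sin²(φ/2) (τ - ‖z‖)²`. -/
lemma cos_half_mul_add_norm_le_norm_ofReal_add {φ τ : ℝ} (hτ : 0 ≤ τ) {z : ℂ}
    (hz : ‖z‖ * Real.cos φ ≤ z.re) :
    Real.cos (φ / 2) * (τ + ‖z‖) ≤ ‖(τ : ℂ) + z‖ := by
  set c := Real.cos (φ / 2)
  rcases lt_or_ge c 0 with hc | hc
  · exact (mul_nonpos_of_nonpos_of_nonneg hc.le (by positivity)).trans (norm_nonneg _)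
  have hcos : Real.cos φ = 2 * c ^ 2 - 1 := by rw [← Real.cos_two_mul]; ring_nf
  have hc1 : c ^ 2 ≤ 1 := Real.cos_sq_le_one _
  have hnorm : ‖(τ : ℂ) + z‖ ^ 2 = τ ^ 2 + 2 * τ * z.re + ‖z‖ ^ 2 := by
    simp only [Complex.sq_norm, normSq_apply, add_re, add_im, ofReal_re, ofReal_im]
    ring
  refine le_of_pow_le_pow_left₀ two_ne_zero (norm_nonneg _) ?_
  rw [hnorm]
  nlinarith [mul_le_mul_of_nonneg_left hz hτ, mul_nonneg (sub_nonneg.2 hc1) (sq_nonneg (τ - ‖z‖))]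

noncomputable def rieszMultiplier (τ : ℝ) (z : ℂ) : ℂ :=
  1 / ((τ : ℂ) + z) ^ (1 / 2 : ℂ) - 1 / (z ^ (1 / 2 : ℂ) + ((τ : ℂ) + z) ^ (1 / 2 : ℂ))

lemma rieszMultiplier_eq_div {τ : ℝ} {z : ℂ} (h₁ : ((τ : ℂ) + z) ^ (1 / 2 : ℂ) ≠ 0)
    (h₂ : z ^ (1 / 2 : ℂ) + ((τ : ℂ) + z) ^ (1 / 2 : ℂ) ≠ 0) :
    rieszMultiplier τ z = z ^ (1 / 2 : ℂ) /
      (((τ : ℂ) + z) ^ (1 / 2 : ℂ) * (z ^ (1 / 2 : ℂ) + ((τ : ℂ) + z) ^ (1 / 2 : ℂ))) := by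
  rw [rieszMultiplier]
  field_simp
  ring

lemma differentiableOn_rieszMultiplier {τ : ℝ} (hτ : 0 ≤ τ) :
    DifferentiableOn ℂ (rieszMultiplier τ) slitPlane := by
  intro z hz
  have hw := ofReal_add_mem_slitPlane hτ hz
  have hre₁ := re_cpow_half_pos hz
  have hre₂ := re_cpow_half_pos hw
  have hsqrt : DifferentiableAt ℂ (fun u : ℂ => u ^ (1 / 2 : ℂ)) z :=
    differentiableAt_id.cpow (differentiableAt_const _) hz
  have hsqrt_add : DifferentiableAt ℂ (fun u : ℂ => ((τ : ℂ) + u) ^ (1 / 2 : ℂ)) z :=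
    ((differentiableAt_const _).add differentiableAt_id).cpow (differentiableAt_const _) hw
  refine (((differentiableAt_const 1).div hsqrt_add ?_).sub
    ((differentiableAt_const 1).div (hsqrt.add hsqrt_add) ?_)).differentiableWithinAt
  · exact ne_zero_of_re_pos hre₂
  · exact ne_zero_of_re_pos (by rw [Pi.add_apply, add_re]; positivity)

lemma cos_half_sq_mul_add_norm_le_norm_mul {φ τ : ℝ} (h0 : 0 ≤ φ) (hπ : φ ≤ π) (hτ : 0 ≤ τ)
    {z : ℂ} (hz : z ∈ sector φ) :
    Real.cos (φ / 2) ^ 2 * (τ + ‖z‖) ≤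
      ‖((τ : ℂ) + z) ^ (1 / 2 : ℂ) * (z ^ (1 / 2 : ℂ) + ((τ : ℂ) + z) ^ (1 / 2 : ℂ))‖ := by
  set c := Real.cos (φ / 2)
  have hc : 0 ≤ c := Real.cos_nonneg_of_mem_Icc ⟨by linarith [pi_pos], by linarith⟩
  have hw := ofReal_add_mem_sector h0 hπ hτ hz
  have hsum := cos_mul_add_norm_lt_norm_add (by linarith) (by linarith [pi_pos])
    (cpow_half_mem_sector h0 hπ hz) (cpow_half_mem_sector h0 hπ hw)
  have hnorm := cos_half_mul_add_norm_le_norm_ofReal_add hτ ((mem_sector_iff h0 hπ).1 hz).le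
  rw [norm_cpow_half, norm_cpow_half] at hsum
  rw [norm_mul, norm_cpow_half]
  calc c ^ 2 * (τ + ‖z‖) ≤ c * ‖(τ : ℂ) + z‖ := by
        rw [sq, mul_assoc]; exact mul_le_mul_of_nonneg_left hnorm hc
    _ = √‖(τ : ℂ) + z‖ * (c * √‖(τ : ℂ) + z‖) := by
        rw [mul_left_comm, Real.mul_self_sqrt (norm_nonneg _)]
    _ ≤ _ := by
        gcongr
        nlinarith [Real.sqrt_nonneg ‖z‖]

lemma norm_rieszMultiplier_le {φ τ : ℝ} (h0 : 0 ≤ φ) (hπ : φ < π) (hτ : 0 ≤ τ) {z : ℂ}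
    (hz : z ∈ sector φ) :
    ‖rieszMultiplier τ z‖ ≤ √‖z‖ / (Real.cos (φ / 2) ^ 2 * (τ + ‖z‖)) := by
  have hc : 0 < Real.cos (φ / 2) := Real.cos_pos_of_mem_Ioo ⟨by linarith, by linarith⟩
  have hz0 : 0 < ‖z‖ := norm_pos_iff.2 hz.1
  have hden := cos_half_sq_mul_add_norm_le_norm_mul h0 hπ.le hτ hz
  have hden_pos : 0 < Real.cos (φ / 2) ^ 2 * (τ + ‖z‖) := by positivity
  obtain ⟨h₁, h₂⟩ := mul_ne_zero_iff.1 (norm_pos_iff.1 (hden_pos.trans_le hden))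
  rw [rieszMultiplier_eq_div h₁ h₂, norm_div, norm_cpow_half]
  gcongr

/-- For `τ > 0` and `φ ∈ (0, π)`, the function
`f(z) = 1/√(τ + z) − 1/(√z + √(τ + z))` (principal branch square roots, realised here by
the principal complex power `w ^ (1/2)`) belongs to `H₀^∞(S_φ)`: it is holomorphic on the
sector `S_φ` and satisfies `|f(z)| ≤ C |z|^s/(1 + |z|^{2s})` there. -/
theorem riesz_multiplier_mem_H0infty (τ φ : ℝ) (hτ : 0 < τ) (hφ : φ ∈ Set.Ioo 0 π) :
    DifferentiableOn ℂ
      (fun z : ℂ => 1 / (↑τ + z) ^ (1/2 : ℂ) -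
        1 / (z ^ (1/2 : ℂ) + (↑τ + z) ^ (1/2 : ℂ))) (sector φ) ∧
    ∃ C s : ℝ, 0 < C ∧ 0 < s ∧ ∀ z ∈ sector φ,
      ‖1 / (↑τ + z) ^ (1/2 : ℂ) -
          1 / (z ^ (1/2 : ℂ) + (↑τ + z) ^ (1/2 : ℂ))‖ ≤
        C * ‖z‖ ^ s / (1 + ‖z‖ ^ (2 * s)) := by
  obtain ⟨hφ0, hφπ⟩ := hφ
  have hc : 0 < Real.cos (φ / 2) := Real.cos_pos_of_mem_Ioo ⟨by linarith, by linarith⟩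
  refine ⟨(differentiableOn_rieszMultiplier hτ.le).mono (sector_subset_slitPlane hφπ.le),
    (Real.cos (φ / 2) ^ 2 * min τ 1)⁻¹, 1 / 2, by positivity, by norm_num, fun z hz => ?_⟩
  have hτz : min τ 1 * (1 + ‖z‖) ≤ τ + ‖z‖ := by
    nlinarith [min_le_left τ 1, min_le_right τ 1, norm_nonneg z]
  rw [show (2 : ℝ) * (1 / 2) = 1 by norm_num, Real.rpow_one, ← Real.sqrt_eq_rpow]
  calc ‖rieszMultiplier τ z‖ ≤ √‖z‖ / (Real.cos (φ / 2) ^ 2 * (τ + ‖z‖)) :=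
        norm_rieszMultiplier_le hφ0.le hφπ hτ.le hz
    _ ≤ √‖z‖ / (Real.cos (φ / 2) ^ 2 * (min τ 1 * (1 + ‖z‖))) := by gcongr
    _ = _ := by field_simp
end

section
/- Let (N, d) be a metric space and let D denote the product distance on N × ℝ as defined in the context. Let α ∈ (0, √3/2), z ∈ N, u > 0, and suppose x ∈ N satisfies d(x, z) ≤ α·u. Let (y, v) ∈ N × ℝ satisfy d(y, z) > 2α·v. Set X := (x, u), Y := (y, v), Z := (z, u). Then D(X, Y) ≥ (1 − √(4α² + 1)/2) · D(Y, Z). -/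
/-!
The product distance `D` is the distance of `WithLp 2 (N × ℝ)`, so `D(Y,Z) ≤ D(X,Y) + D(X,Z)`
with `D(X,Z) = d(x,z) ≤ αu`. On the other hand, in the plane with coordinates `(d(y,z), v)` the
point `Y` lies beyond the line `d = 2αv`, whose distance from `(0,u)` is `2αu / √(4α² + 1)`;
hence `αu ≤ (√(4α² + 1)/2) · D(Y,Z)`. Subtracting the two estimates gives the claim.
-/

open Real

theorem add_mul_le_sqrt_mul_sqrt (a b c d : ℝ) :
    a * c + b * d ≤ √(a ^ 2 + b ^ 2) * √(c ^ 2 + d ^ 2) := by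
  simpa [Fin.sum_univ_two] using sum_mul_le_sqrt_mul_sqrt Finset.univ ![a, b] ![c, d]

theorem mul_le_sqrt_one_add_sq_mul_sqrt_of_mul_le {k a u v : ℝ} (h : k * v ≤ a) :
    k * u ≤ √(1 + k ^ 2) * √(a ^ 2 + (v - u) ^ 2) :=
  calc k * u ≤ 1 * a + k * (u - v) := by linarith
    _ ≤ √(1 ^ 2 + k ^ 2) * √(a ^ 2 + (u - v) ^ 2) := add_mul_le_sqrt_mul_sqrt ..
    _ = √(1 + k ^ 2) * √(a ^ 2 + (v - u) ^ 2) := by rw [one_pow, ← neg_sub, neg_sq]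

theorem WithLp.dist_toLp_prod {α β : Type*} [Dist α] [Dist β] (a c : α) (b d : β) :
    dist (toLp 2 (a, b)) (toLp 2 (c, d)) = √(dist a c ^ 2 + dist b d ^ 2) := by
  rw [prod_dist_eq_add (by norm_num), sqrt_eq_rpow]
  norm_num [rpow_two]

theorem cone_distance_comparison_general {N : Type*} [MetricSpace N]
    (α : ℝ)
    (z x y : N) (u v : ℝ)
    (hx : dist x z ≤ α * u) (hy : 2 * α * v < dist y z) :
    (1 - Real.sqrt (4 * α ^ 2 + 1) / 2) *
        Real.sqrt (dist y z ^ 2 + (v - u) ^ 2) ≤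
      Real.sqrt (dist x y ^ 2 + (u - v) ^ 2) := by
  have hcone : 2 * α * u ≤ √(4 * α ^ 2 + 1) * √(dist y z ^ 2 + (v - u) ^ 2) := by
    have h := mul_le_sqrt_one_add_sq_mul_sqrt_of_mul_le (u := u) hy.le
    rwa [mul_pow, show (2 : ℝ) ^ 2 = 4 by norm_num, add_comm 1] at h
  have htri : √(dist y z ^ 2 + (v - u) ^ 2) ≤ √(dist x y ^ 2 + (v - u) ^ 2) + dist x z := by
    have h := dist_triangle (WithLp.toLp 2 (y, v)) (WithLp.toLp 2 (x, u)) (WithLp.toLp 2 (z, u))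
    simp only [WithLp.dist_toLp_prod, Real.dist_eq, sub_self, abs_zero, sq_abs] at h
    rwa [dist_comm y x, zero_pow two_ne_zero, add_zero, sqrt_sq dist_nonneg] at h
  rw [← neg_sub v u, neg_sq]
  linarith

/-- Cone-separation estimate: if `X = (x,u)` lies in the cone of aperture `α < √3/2` with
vertex `z` (i.e. `d(x,z) ≤ αu`) and `Y = (y,v)` lies outside the cone of aperture `2α`
(i.e. `d(y,z) > 2αv`), then with `Z = (z,u)` and the product distance
`D((x,u),(y,v)) = √(d(x,y)² + (u−v)²)` one has
`D(X,Y) ≥ (1 − √(4α² + 1)/2) · D(Y,Z)`. -/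
theorem cone_distance_comparison {N : Type*} [MetricSpace N]
    (α : ℝ) (hα : α ∈ Set.Ioo 0 (Real.sqrt 3 / 2))
    (z x y : N) (u v : ℝ) (hu : 0 < u)
    (hx : dist x z ≤ α * u) (hy : 2 * α * v < dist y z) :
    (1 - Real.sqrt (4 * α ^ 2 + 1) / 2) *
        Real.sqrt (dist y z ^ 2 + (v - u) ^ 2) ≤
      Real.sqrt (dist x y ^ 2 + (u - v) ^ 2) :=
  cone_distance_comparison_general α z x y u v hx hy
end

section
/- Let (N, d) be a metric space, let z, y ∈ N, let α > 0, u > 0, and let v ∈ ℝ satisfy d(y, z) > 2α·v. Then √(d(y, z)² + (v − u)²) ≥ 2α·u / √(4α² + 1). -/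
open Real

/-! The point `(y, v)` lies in the half-plane `2α·v < d(y, z)`, so with `a = 2α` we get
`a·u = a·(u - v) + a·v ≤ a·(u - v) + 1·d(y, z)`, and Cauchy–Schwarz bounds the right-hand side by
`√(a² + 1) · √((u - v)² + d(y, z)²)`. -/

theorem mul_add_mul_le_sqrt_mul_sqrt (a b x y : ℝ) :
    a * x + b * y ≤ √(a ^ 2 + b ^ 2) * √(x ^ 2 + y ^ 2) := by
  rw [← sqrt_mul (by positivity)]
  exact le_sqrt_of_sq_le (by nlinarith [sq_nonneg (a * y - b * x)])

theorem distance_to_cone_complement_general {N : Type*} [MetricSpace N]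
    (α u : ℝ) (z y : N) (v : ℝ)
    (hy : 2 * α * v < dist y z) :
    2 * α * u / Real.sqrt (4 * α ^ 2 + 1) ≤
      Real.sqrt (dist y z ^ 2 + (v - u) ^ 2) := by
  have key : 2 * α * u ≤ √(4 * α ^ 2 + 1) * √(dist y z ^ 2 + (v - u) ^ 2) :=
    calc 2 * α * u ≤ 2 * α * (u - v) + 1 * dist y z := by linarith
      _ ≤ √((2 * α) ^ 2 + 1 ^ 2) * √((u - v) ^ 2 + dist y z ^ 2) :=
        mul_add_mul_le_sqrt_mul_sqrt _ _ _ _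
      _ = √(4 * α ^ 2 + 1) * √(dist y z ^ 2 + (v - u) ^ 2) := by ring_nf
  exact div_le_of_le_mul₀ (sqrt_nonneg _) (sqrt_nonneg _) (by linarith)

/-- If `(y,v)` lies outside the cone `{(y,v) : d(y,z) ≤ 2αv}` of aperture `2α` with vertex
`z`, then its product distance to the point `(z,u)` is at least `2αu/√(4α² + 1)`. -/
theorem distance_to_cone_complement {N : Type*} [MetricSpace N]
    (α u : ℝ) (hα : 0 < α) (hu : 0 < u) (z y : N) (v : ℝ)
    (hy : 2 * α * v < dist y z) :
    2 * α * u / Real.sqrt (4 * α ^ 2 + 1) ≤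
      Real.sqrt (dist y z ^ 2 + (v - u) ^ 2) :=
  distance_to_cone_complement_general α u z y v hy
end
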